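/- For a flat layout L, the following are equivalent: (1) L is compact; (2) coal(L) is compact; (3) squeeze(L) is compact; (4) sort(L) is compact. -/
import Mathlib


/-- A flat layout, represented as its list of modes `(sᵢ, dᵢ)`:
the first component of each mode is a shape entry, the second a stride entry. -/
abbrev FlatLayout := List (ℕ × ℕ)

namespace FlatLayout

/-- Validity of a flat layout: every shape entry is a positive integer. -/
def Valid (L : FlatLayout) : Prop := ∀ p ∈ L, 0 < p.1

/-- The size of a flat layout: the product of its shape entries. -/
def size (L : FlatLayout) : ℕ := (L.map Prod.fst).prod

/-- The cosize of a flat layout: `1 + Σ (sᵢ - 1) * dᵢ`. -/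
def cosize (L : FlatLayout) : ℕ := 1 + (L.map fun p => (p.1 - 1) * p.2).sum

/-- The rank of a flat layout: its number of modes. -/
def rank (L : FlatLayout) : ℕ := L.length

/-- The layout function `Φ_L`: `Φ_L(x) = Σ xᵢ·dᵢ` where
`xᵢ = ⌊x / (s₁⋯sᵢ₋₁)⌋ mod sᵢ`. -/
def phi : FlatLayout → ℕ → ℕ
  | [], _ => 0
  | (s, d) :: rest, x => x % s * d + phi rest (x / s)

/-- `squeeze L` deletes every mode whose shape entry equals `1`. -/
def squeeze (L : FlatLayout) : FlatLayout := L.filter fun p => p.1 != 1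

/-- `filterZeros L` deletes every mode whose stride entry equals `0`. -/
def filterZeros (L : FlatLayout) : FlatLayout := L.filter fun p => p.2 != 0

/-- The ordering on modes: `(s,d) ⪯ (s',d')` iff `d < d'`, or `d = d'` and `s ≤ s'`. -/
def ModeLE (p q : ℕ × ℕ) : Prop := p.2 < q.2 ∨ (p.2 = q.2 ∧ p.1 ≤ q.1)

instance : DecidableRel ModeLE := fun p q => by unfold ModeLE; infer_instance

/-- A flat layout is sorted if its consecutive modes are `⪯`-increasing. -/
def Sorted (L : FlatLayout) : Prop := L.Chain' ModeLE

/-- `sortL L` stably sorts the modes of `L` with respect to `⪯`. -/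
def sortL (L : FlatLayout) : FlatLayout := L.mergeSort fun p q => decide (ModeLE p q)

/-- A flat layout is coalesced if no shape entry equals `1` and
for consecutive modes, `sᵢ·dᵢ ≠ dᵢ₊₁`. -/
def Coalesced (L : FlatLayout) : Prop :=
  (∀ p ∈ L, p.1 ≠ 1) ∧ L.Chain' fun p q => p.1 * p.2 ≠ q.2

/-- Combine adjacent modes `(s,d), (s',d')` with `d' = s·d` into `(s·s', d)`, repeatedly. -/
def coalAux : List (ℕ × ℕ) → List (ℕ × ℕ)
  | [] => []
  | p :: rest =>
    match coalAux rest with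
    | [] => [p]
    | q :: rest' =>
        if p.1 * p.2 = q.2 then (p.1 * q.1, p.2) :: rest' else p :: q :: rest'

/-- Coalesce of a flat layout: squeeze, then repeatedly combine adjacent modes
`(s,d), (s',d')` with `d' = s·d` into `(s·s', d)`. -/
def coal (L : FlatLayout) : FlatLayout := coalAux (squeeze L)

/-- Compactness: the layout function takes values in `{0, …, cosize L - 1}` and induces a
bijection `{0, …, size L - 1} → {0, …, cosize L - 1}`. -/
def Compact (L : FlatLayout) : Prop :=
  Set.BijOn (phi L) {x | x < size L} {y | y < cosize L}

/-- `B` is a complement of `A` (written `A ⊥ B`) if the concatenation `A ⋆ B` is compact. -/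
def Perp (A B : FlatLayout) : Prop := Compact (A ++ B)

/-- `A` is complementable if, writing `sort(squeeze A) = (s₁,…,sₘ):(d₁,…,dₘ)`,
`sᵢ·dᵢ` divides `dᵢ₊₁` for all `1 ≤ i < m`. -/
def Complementable (A : FlatLayout) : Prop :=
  (sortL (squeeze A)).Chain' fun p q => p.1 * p.2 ∣ q.2

/-- `B` is an `N`-complement of `A` if `B` is a complement of `A`
and `size A * size B = N`. -/
def IsNComplement (A B : FlatLayout) (N : ℕ) : Prop :=
  Perp A B ∧ size A * size B = N

/-- `A` is `N`-complementable if, writing `sort(squeeze A) = (s₁,…,sₘ):(d₁,…,dₘ)`,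
`sᵢ·dᵢ ∣ dᵢ₊₁` for all `1 ≤ i < m`, and `sₘ·dₘ ∣ N`. -/
def NComplementable (A : FlatLayout) (N : ℕ) : Prop :=
  ((sortL (squeeze A)).Chain' fun p q => p.1 * p.2 ∣ q.2) ∧
  ∀ p, (sortL (squeeze A)).getLast? = some p → p.1 * p.2 ∣ N

/-- Given `l = [(s₁,d₁),…,(sₘ,dₘ)]`, the layout
`C = (d₁, d₂/(s₁d₁), …, dₘ/(sₘ₋₁dₘ₋₁)) : (1, s₁d₁, …, sₘ₋₁dₘ₋₁)`. -/
def compModes (l : List (ℕ × ℕ)) : List (ℕ × ℕ) :=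
  match l with
  | [] => []
  | (_, d₁) :: t =>
      (d₁, 1) :: (l.zip t).map fun pq => (pq.2.2 / (pq.1.1 * pq.1.2), pq.1.1 * pq.1.2)

/-- The complement `comp A = coal C` of a complementable flat layout `A`. -/
def comp (A : FlatLayout) : FlatLayout := coal (compModes (sortL (squeeze A)))

/-- Given `l = [(s₁,d₁),…,(sₘ,dₘ)]` and `N`, the layout
`C = (d₁, d₂/(s₁d₁), …, dₘ/(sₘ₋₁dₘ₋₁), N/(sₘdₘ)) : (1, s₁d₁, …, sₘ₋₁dₘ₋₁, sₘdₘ)`. -/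
def compNModes (l : List (ℕ × ℕ)) (N : ℕ) : List (ℕ × ℕ) :=
  match l.getLast? with
  | none => [(N, 1)]
  | some (sm, dm) => compModes l ++ [(N / (sm * dm), sm * dm)]

/-- The `N`-complement `comp(A, N) = coal C` of an `N`-complementable flat layout `A`. -/
def compN (A : FlatLayout) (N : ℕ) : FlatLayout :=
  coal (compNModes (sortL (squeeze A)) N)

/-- `L` is tractable if, writing `sort L = (s₁,…,sₘ):(d₁,…,dₘ)`, for every `1 ≤ i < m`
either `dᵢ = 0` or `sᵢ·dᵢ` divides `dᵢ₊₁`. -/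
def Tractable (L : FlatLayout) : Prop :=
  (sortL L).Chain' fun p q => p.2 = 0 ∨ p.1 * p.2 ∣ q.2

end FlatLayout


namespace FlatLayout

lemma phi_squeeze (L : FlatLayout) : phi (squeeze L) = phi L := by
  funext x
  induction L generalizing x with
  | nil => rfl
  | cons p t ih =>
    obtain ⟨s, d⟩ := p
    by_cases h : s = 1
    · subst h
      simp only [phi, Nat.mod_one, Nat.zero_mul, Nat.zero_add, Nat.div_one]
      simpa [squeeze] using ih x
    · simp [squeeze, List.filter_cons, h, phi]
      simpa [squeeze] using ih (x / s)

lemma size_squeeze (L : FlatLayout) : size (squeeze L) = size L := by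
  induction L with
  | nil => rfl
  | cons p t ih =>
    by_cases h : p.1 = 1 <;> simp [squeeze, List.filter_cons, h, size] at * <;> omega

lemma cosize_squeeze (L : FlatLayout) : cosize (squeeze L) = cosize L := by
  induction L with
  | nil => rfl
  | cons p t ih =>
    by_cases h : p.1 = 1 <;> simp [squeeze, List.filter_cons, h, cosize] at * <;> omega

lemma coalAux_cons_nil {rest : FlatLayout} (h : coalAux rest = []) (p : ℕ × ℕ) :
    coalAux (p :: rest) = [p] := by
  rw [coalAux, h]

lemma coalAux_cons_pos {rest : FlatLayout} {q : ℕ × ℕ} {rest' : FlatLayout}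
    (h : coalAux rest = q :: rest') (p : ℕ × ℕ) (he : p.1 * p.2 = q.2) :
    coalAux (p :: rest) = (p.1 * q.1, p.2) :: rest' := by
  rw [coalAux, h]
  show (if p.1 * p.2 = q.2 then (p.1 * q.1, p.2) :: rest' else p :: q :: rest') = _
  rw [if_pos he]

lemma coalAux_cons_neg {rest : FlatLayout} {q : ℕ × ℕ} {rest' : FlatLayout}
    (h : coalAux rest = q :: rest') (p : ℕ × ℕ) (he : ¬ p.1 * p.2 = q.2) :
    coalAux (p :: rest) = p :: q :: rest' := by
  rw [coalAux, h]
  show (if p.1 * p.2 = q.2 then (p.1 * q.1, p.2) :: rest' else p :: q :: rest') = _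
  rw [if_neg he]

lemma valid_coalAux {l : FlatLayout} (h : Valid l) : Valid (coalAux l) := by
  induction l with
  | nil => exact h
  | cons p rest ih =>
    have hp : 0 < p.1 := h p (by simp)
    have hr : Valid rest := fun q hq => h q (by simp [hq])
    have ihr := ih hr
    rcases hc : coalAux rest with _ | ⟨q, rest'⟩
    · rw [coalAux_cons_nil hc]
      rintro r hr'; simp at hr'; simpa [hr']
    · rw [hc] at ihr
      have hq : 0 < q.1 := ihr q (by simp)
      have hrest' : ∀ r ∈ rest', 0 < r.1 := fun r hr' => ihr r (by simp [hr'])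
      by_cases he : p.1 * p.2 = q.2
      · rw [coalAux_cons_pos hc p he]
        intro r hm
        rcases List.mem_cons.mp hm with rfl | hr'
        · exact Nat.mul_pos hp hq
        · exact hrest' r hr'
      · rw [coalAux_cons_neg hc p he]
        intro r hm
        rcases List.mem_cons.mp hm with rfl | hm'
        · exact hp
        rcases List.mem_cons.mp hm' with rfl | hr'
        · exact hq
        · exact hrest' r hr'

lemma size_cons (p : ℕ × ℕ) (t : FlatLayout) : size (p :: t) = p.1 * size t := by
  simp [size]

lemma cosize_cons (p : ℕ × ℕ) (t : FlatLayout) :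
    cosize (p :: t) = (p.1 - 1) * p.2 + cosize t := by
  simp [cosize]; omega

lemma size_coalAux (l : FlatLayout) : size (coalAux l) = size l := by
  induction l with
  | nil => rfl
  | cons p rest ih =>
    rcases hc : coalAux rest with _ | ⟨q, rest'⟩ <;> rw [hc] at ih
    · rw [coalAux_cons_nil hc, size_cons, size_cons, ← ih]
    · by_cases he : p.1 * p.2 = q.2
      · rw [coalAux_cons_pos hc p he, size_cons, size_cons, ← ih, size_cons]
        show p.1 * q.1 * size rest' = p.1 * (q.1 * size rest')
        ring
      · rw [coalAux_cons_neg hc p he, size_cons, size_cons, size_cons, ← ih, size_cons]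

lemma cosize_coalAux {l : FlatLayout} (h : Valid l) : cosize (coalAux l) = cosize l := by
  induction l with
  | nil => rfl
  | cons p rest ih =>
    have hp : 0 < p.1 := h p (by simp)
    have hr : Valid rest := fun q hq => h q (by simp [hq])
    have ihr := ih hr
    rcases hc : coalAux rest with _ | ⟨q, rest'⟩ <;> rw [hc] at ihr
    · rw [coalAux_cons_nil hc, cosize_cons, cosize_cons, ← ihr]
    · have hq : 0 < q.1 := valid_coalAux hr q (by rw [hc]; simp)
      by_cases he : p.1 * p.2 = q.2
      · rw [coalAux_cons_pos hc p he, cosize_cons, cosize_cons, ← ihr, cosize_cons, ← he]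
        show (p.1 * q.1 - 1) * p.2 + cosize rest' =
          (p.1 - 1) * p.2 + ((q.1 - 1) * (p.1 * p.2) + cosize rest')
        have key : (p.1 * q.1 - 1) * p.2 = (p.1 - 1) * p.2 + (q.1 - 1) * (p.1 * p.2) := by
          obtain ⟨a, ha⟩ : ∃ a, p.1 = a + 1 := ⟨p.1 - 1, by omega⟩
          obtain ⟨b, hb⟩ : ∃ b, q.1 = b + 1 := ⟨q.1 - 1, by omega⟩
          rw [ha, hb]
          simp [Nat.add_mul, Nat.mul_add]
          ring
        omega
      · rw [coalAux_cons_neg hc p he, cosize_cons, cosize_cons, cosize_cons, ← ihr,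
          cosize_cons]

lemma phi_coalAux (l : FlatLayout) : phi (coalAux l) = phi l := by
  funext x
  induction l generalizing x with
  | nil => rfl
  | cons p rest ih =>
    rcases hc : coalAux rest with _ | ⟨q, rest'⟩ <;>
      have ih' := fun y => (hc ▸ ih y : phi _ y = phi rest y)
    · obtain ⟨s, d⟩ := p
      rw [coalAux_cons_nil hc]
      show x % s * d + phi [] (x / s) = x % s * d + phi rest (x / s)
      rw [← ih' (x / s)]
    · obtain ⟨s, d⟩ := p; obtain ⟨s', d'⟩ := q
      by_cases he : s * d = d'
      · rw [coalAux_cons_pos hc (s, d) (by simpa using he)]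
        show x % (s * s') * d + phi rest' (x / (s * s')) = x % s * d + phi rest (x / s)
        rw [← ih' (x / s)]
        show _ = x % s * d + ((x / s) % s' * d' + phi rest' (x / s / s'))
        rw [Nat.mod_mul, Nat.div_div_eq_div_mul, ← he]
        ring
      · rw [coalAux_cons_neg hc (s, d) (by simpa using he)]
        show x % s * d + phi ((s', d') :: rest') (x / s) = x % s * d + phi rest (x / s)
        rw [← ih' (x / s)]

lemma mrange_add (a b : ℕ) :
    Multiset.range (a + b) = Multiset.range a + (Multiset.range b).map (a + ·) := by
  simp only [Multiset.range, List.range_add]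
  rfl

/-- The multiset of values of a flat layout. -/

def mval : FlatLayout → Multiset ℕ
  | [] => {0}
  | (s, d) :: t => (Multiset.range s).bind fun i => (mval t).map fun y => i * d + y

lemma range_mul_map (s n : ℕ) (F : ℕ → ℕ → ℕ) :
    (Multiset.range (s * n)).map (fun x => F (x % s) (x / s)) =
      (Multiset.range s).bind fun i => (Multiset.range n).map fun j => F i j := by
  induction n with
  | zero => simp
  | succ n ih =>
    rw [show s * (n + 1) = s * n + s by ring, mrange_add, Multiset.map_add, ih,
      Multiset.map_map]
    have h2 : (Multiset.range s).map ((fun x => F (x % s) (x / s)) ∘ (s * n + ·)) =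
        (Multiset.range s).map (fun i => F i n) := by
      apply Multiset.map_congr rfl
      intro i hi
      rw [Multiset.mem_range] at hi
      have hs : 0 < s := by omega
      simp only [Function.comp_apply]
      rw [Nat.mul_add_mod, Nat.mod_eq_of_lt hi, Nat.mul_add_div hs,
        Nat.div_eq_of_lt hi, Nat.add_zero]
    rw [h2]
    have h3 : ∀ i : ℕ, (Multiset.range (n + 1)).map (fun j => F i j) =
        F i n ::ₘ (Multiset.range n).map (fun j => F i j) := by
      intro i
      rw [show n + 1 = Nat.succ n from rfl, Multiset.range_succ, Multiset.map_cons]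
    simp only [h3]
    have h4 : ∀ (m : Multiset ℕ) (f : ℕ → ℕ) (g : ℕ → Multiset ℕ),
        (m.bind fun i => f i ::ₘ g i) = m.map f + m.bind g := by
      intro m f g
      induction m using Multiset.induction with
      | empty => simp
      | cons a m ihm =>
        rw [Multiset.cons_bind, Multiset.map_cons, Multiset.cons_bind, ihm,
          ← Multiset.singleton_add, ← Multiset.singleton_add (f a)]
        abel
    rw [h4, add_comm]

lemma mval_eq (L : FlatLayout) : mval L = (Multiset.range (size L)).map (phi L) := by
  induction L with
  | nil => simp [mval, size, phi, Multiset.replicate_one]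
  | cons p t ih =>
    obtain ⟨s, d⟩ := p
    rw [show size ((s, d) :: t) = s * size t from size_cons _ _,
      show phi ((s, d) :: t) = fun x => (fun i j => i * d + phi t j) (x % s) (x / s) from rfl,
      range_mul_map s (size t) (fun i j => i * d + phi t j)]
    rw [mval, ih]
    simp [Multiset.map_map, Function.comp]

lemma mval_perm {l l' : FlatLayout} (h : l.Perm l') : mval l = mval l' := by
  induction h with
  | nil => rfl
  | cons p _ ih =>
    obtain ⟨s, d⟩ := p
    rw [mval, mval, ih]
  | swap p q t =>
    obtain ⟨s, d⟩ := p; obtain ⟨s', d'⟩ := q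
    simp only [mval, Multiset.map_bind, Multiset.map_map, Function.comp]
    rw [Multiset.bind_bind]
    congr 1
    funext j
    congr 1
    funext i
    congr 1
    funext y
    ring
  | trans _ _ ih1 ih2 => exact ih1.trans ih2

lemma compact_iff (L : FlatLayout) :
    Compact L ↔ (Multiset.range (size L)).map (phi L) = Multiset.range (cosize L) := by
  constructor
  · rintro ⟨hmaps, hinj, hsurj⟩
    have hnd : ((Multiset.range (size L)).map (phi L)).Nodup := by
      refine Multiset.Nodup.map_on ?_ (Multiset.nodup_range _)
      intro x hx y hy h
      exact hinj (by simpa using hx) (by simpa using hy) h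
    rw [Multiset.Nodup.ext hnd (Multiset.nodup_range _)]
    intro a
    simp only [Multiset.mem_map, Multiset.mem_range]
    constructor
    · rintro ⟨x, hx, rfl⟩
      exact hmaps hx
    · intro ha
      obtain ⟨x, hx, hxa⟩ := hsurj ha
      exact ⟨x, hx, hxa⟩
  · intro h
    refine ⟨?_, ?_, ?_⟩
    · intro x hx
      have : phi L x ∈ (Multiset.range (size L)).map (phi L) :=
        Multiset.mem_map.mpr ⟨x, Multiset.mem_range.mpr hx, rfl⟩
      rw [h, Multiset.mem_range] at this
      exact this
    · intro x hx y hy hxy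
      have hnd : ((Multiset.range (size L)).map (phi L)).Nodup := by
        rw [h]; exact Multiset.nodup_range _
      exact Multiset.inj_on_of_nodup_map hnd x (Multiset.mem_range.mpr hx)
        y (Multiset.mem_range.mpr hy) hxy
    · intro y hy
      have : y ∈ (Multiset.range (size L)).map (phi L) := by
        rw [h, Multiset.mem_range]; exact hy
      obtain ⟨x, hx, hxy⟩ := Multiset.mem_map.mp this
      exact ⟨x, Multiset.mem_range.mp hx, hxy⟩

lemma compact_squeeze (L : FlatLayout) : Compact (squeeze L) ↔ Compact L := by
  unfold Compact
  rw [phi_squeeze, size_squeeze, cosize_squeeze]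

lemma valid_squeeze {L : FlatLayout} (h : Valid L) : Valid (squeeze L) :=
  fun p hp => h p (List.mem_filter.mp hp).1

lemma compact_coal (L : FlatLayout) (hL : Valid L) : Compact (coal L) ↔ Compact L := by
  rw [← compact_squeeze L]
  unfold Compact coal
  rw [phi_coalAux, size_coalAux, cosize_coalAux (valid_squeeze hL)]

lemma compact_perm {l l' : FlatLayout} (h : l.Perm l') : Compact l ↔ Compact l' := by
  have hs : size l = size l' := (h.map Prod.fst).prod_eq
  have hc : cosize l = cosize l' := by
    unfold cosize
    rw [(h.map fun p => (p.1 - 1) * p.2).sum_eq]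
  rw [compact_iff, compact_iff, ← mval_eq, ← mval_eq, mval_perm h, hc]

lemma compact_sortL (L : FlatLayout) : Compact (sortL L) ↔ Compact L :=
  compact_perm (List.mergeSort_perm L _)

end FlatLayout


open FlatLayout in
theorem compact_tfae (L : FlatLayout) (hL : L.Valid) :
    [Compact L, Compact (coal L), Compact (squeeze L), Compact (sortL L)].TFAE := by
  tfae_have 2 ↔ 1 := compact_coal L hL
  tfae_have 3 ↔ 1 := compact_squeeze L
  tfae_have 4 ↔ 1 := compact_sortL L
  tfae_finish
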